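/- arXiv:2304.12036 — 2 statements merged into one kernel-verified Lean document; each statement's English description precedes it below -/
import Mathlib

section
/- Let A be a symmetric matrix with nonnegative entries on a finite vertex set V, let C = {C₁,…,C_k} be a partition of V, let b ∈ V with block C(b), let Q = {q ∈ V : q ∉ C(b) and A[b,q] > 0} be the set of all inter-cluster neighbors of b (perturbation ratio α = 1), and let A' = A'_{−b} be the degree/volume-preserving perturbation of A at b with respect to Q. Then for every block C_m of the partition with assoc(C_m, V | A) > 0, the normalized association does not decrease: N_asso(C_m | A) ≤ N_asso(C_m | A'). -/
open Finset

/-- Degree/volume-preserving perturbation of `A` at `b` with respect to `Q`. -/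
noncomputable def perturb {V : Type*} [Fintype V] [DecidableEq V]
    (A : V → V → ℝ) (b : V) (Q : Finset V) : V → V → ℝ := fun i j =>
  if i = b ∧ j = b then A b b + ∑ q ∈ Q, A b q
  else if i = b ∧ j ∈ Q then 0
  else if j = b ∧ i ∈ Q then 0
  else if i = j ∧ i ∈ Q then A i i + A b i
  else A i j

/-- `assoc(S, T | A) = ∑_{s∈S, t∈T} A[s,t]`. -/
noncomputable def assoc {V : Type*} (A : V → V → ℝ) (S T : Finset V) : ℝ :=
  ∑ s ∈ S, ∑ t ∈ T, A s t

/-- The block of the partition (given by the labelling `cl`) with label `m`. -/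
def block {V ι : Type*} [Fintype V] [DecidableEq ι] (cl : V → ι) (m : ι) : Finset V :=
  univ.filter fun i => cl i = m

/-- Normalized association of the block labelled `m`:
`N_asso(C_m | A) = assoc(C_m, C_m | A) / assoc(C_m, V | A)`. -/
noncomputable def Nasso {V ι : Type*} [Fintype V] [DecidableEq ι]
    (A : V → V → ℝ) (cl : V → ι) (m : ι) : ℝ :=
  assoc A (block cl m) (block cl m) / assoc A (block cl m) univ

/-- Weighted inter-cluster degree of `b`: `d_b^inter = ∑_{q ∉ C(b)} A[b,q]`. -/
noncomputable def dinter {V ι : Type*} [Fintype V] [DecidableEq ι]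
    (A : V → V → ℝ) (cl : V → ι) (b : V) : ℝ :=
  ∑ q ∈ univ.filter (fun q => cl q ≠ cl b), A b q

/-- The set `Q` of inter-cluster neighbors of `b` (perturbation ratio α = 1). -/
noncomputable def interNbrs {V ι : Type*} [Fintype V] [DecidableEq ι]
    (A : V → V → ℝ) (cl : V → ι) (b : V) : Finset V :=
  univ.filter fun q => cl q ≠ cl b ∧ 0 < A b q

/-!
Moving the weight `A[b,q]` of each edge `b–q` with `q ∈ Q` onto the diagonal entries `A[b,b]` and
`A[q,q]` leaves every row sum unchanged (by symmetry), so `assoc(C_m, V)` is preserved. Since `Q`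
lies outside the block of `b`, no deleted edge lies inside a block, while the diagonal entries
only grow; hence `assoc(C_m, C_m)` can only increase.
-/

section Perturb

variable {V : Type*} [Fintype V] [DecidableEq V] {A : V → V → ℝ} {b : V} {Q : Finset V}

/-- The perturbation as `A` plus a diagonal correction minus the deleted edges. -/
lemma perturb_apply (hb : b ∉ Q) (i j : V) :
    perturb A b Q i j = A i j
      + (if i = j then (if i = b then ∑ q ∈ Q, A b q else if i ∈ Q then A b i else 0) else 0)
      - (if i = b then (if j ∈ Q then A b j else 0) else 0)
      - (if i ∈ Q then (if j = b then A i b else 0) else 0) := by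
  unfold perturb
  split_ifs <;> subst_vars <;> simp_all

lemma sum_perturb_row (hb : b ∉ Q) (hsym : ∀ q ∈ Q, A q b = A b q) (i : V) :
    ∑ j, perturb A b Q i j = ∑ j, A i j := by
  simp only [perturb_apply hb, sum_add_distrib, sum_sub_distrib, sum_ite_eq, sum_ite_eq',
    sum_ite_irrel, sum_ite_mem, univ_inter, mem_univ, if_true, sum_const_zero]
  by_cases hib : i = b
  · subst hib
    simp [hb]
  · by_cases hiQ : i ∈ Q
    · simp [hib, hiQ, hsym i hiQ]
    · simp [hib, hiQ]

lemma assoc_perturb_univ (hb : b ∉ Q) (hsym : ∀ q ∈ Q, A q b = A b q) (S : Finset V) :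
    assoc (perturb A b Q) S univ = assoc A S univ :=
  sum_congr rfl fun i _ => sum_perturb_row hb hsym i

lemma le_perturb_apply (hb : b ∉ Q) (hQ : ∀ q ∈ Q, 0 ≤ A b q) {i j : V}
    (hij : i = b → j ∉ Q) (hji : i ∈ Q → j ≠ b) : A i j ≤ perturb A b Q i j := by
  have hsum : 0 ≤ ∑ q ∈ Q, A b q := sum_nonneg hQ
  rw [perturb_apply hb]
  split_ifs <;> simp_all

lemma assoc_le_assoc_perturb (hb : b ∉ Q) (hQ : ∀ q ∈ Q, 0 ≤ A b q) {S : Finset V}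
    (hS : b ∈ S → Disjoint S Q) : assoc A S S ≤ assoc (perturb A b Q) S S :=
  sum_le_sum fun i hi => sum_le_sum fun j hj =>
    le_perturb_apply hb hQ (fun h => disjoint_left.1 (hS (h ▸ hi)) hj)
      (fun hiQ h => disjoint_left.1 (hS (h ▸ hj)) hi hiQ)

end Perturb

section InterNbrs

variable {V ι : Type*} [Fintype V] [DecidableEq ι] {A : V → V → ℝ} {cl : V → ι} {b : V}

lemma self_notMem_interNbrs : b ∉ interNbrs A cl b := by
  simp [interNbrs]

lemma nonneg_of_mem_interNbrs {q : V} (hq : q ∈ interNbrs A cl b) : 0 ≤ A b q :=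
  (mem_filter.1 hq).2.2.le

lemma disjoint_block_interNbrs {m : ι} (hb : b ∈ block cl m) :
    Disjoint (block cl m) (interNbrs A cl b) := by
  simp only [block, mem_filter, mem_univ, true_and] at hb
  exact disjoint_left.2 fun q hq hq' =>
    (mem_filter.1 hq').2.1 ((mem_filter.1 hq).2.trans hb.symm)

end InterNbrs

theorem stmt1_general {V : Type*} [Fintype V] [DecidableEq V] {k : ℕ}
    (A : V → V → ℝ) (hsym : ∀ i j, A i j = A j i)
    (cl : V → Fin k) (b : V) :
    ∀ m : Fin k, 0 < assoc A (block cl m) univ →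
      Nasso A cl m ≤ Nasso (perturb A b (interNbrs A cl b)) cl m := by
  intro m hpos
  have hb : b ∉ interNbrs A cl b := self_notMem_interNbrs
  unfold Nasso
  rw [assoc_perturb_univ hb (fun q _ => hsym q b)]
  exact div_le_div_of_nonneg_right
    (assoc_le_assoc_perturb hb (fun q => nonneg_of_mem_interNbrs) disjoint_block_interNbrs)
    hpos.le

theorem stmt1 {V : Type*} [Fintype V] [DecidableEq V] {k : ℕ}
    (A : V → V → ℝ) (hsym : ∀ i j, A i j = A j i) (hnn : ∀ i j, 0 ≤ A i j)
    (cl : V → Fin k) (hpart : Function.Surjective cl) (b : V) :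
    ∀ m : Fin k, 0 < assoc A (block cl m) univ →
      Nasso A cl m ≤ Nasso (perturb A b (interNbrs A cl b)) cl m :=
  stmt1_general A hsym cl b
end

section
/- Let A be a symmetric matrix with nonnegative entries on a finite vertex set V, let C = {C₁,…,C_k} be a partition of V, let b ∈ V with block C(b), let Q = {q ∈ V : q ∉ C(b) and A[b,q] > 0}, and let A' = A'_{−b} be the degree/volume-preserving perturbation of A at b with respect to Q. Then the total increase in intra-block association equals twice the inter-cluster degree of b: Σ_{m=1}^{k} assoc(C_m, C_m | A') − Σ_{m=1}^{k} assoc(C_m, C_m | A) = 2 · d_b^inter, where d_b^inter = Σ_{q∉C(b)} A[b,q]. -/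
open Finset

section IntraBlock

variable {V ι : Type*} [Fintype V] [DecidableEq ι] [Fintype ι]

lemma sum_assoc_block_self (B : V → V → ℝ) (cl : V → ι) :
    ∑ m, assoc B (block cl m) (block cl m) = ∑ i, ∑ j ∈ block cl (cl i), B i j := by
  simp only [assoc, block, sum_filter]
  rw [sum_comm]
  exact sum_congr rfl fun i _ => by simp

lemma sum_assoc_block_self_sub_of_eq_off_diag {A B : V → V → ℝ} {cl : V → ι}
    (h : ∀ i j, i ≠ j → cl i = cl j → B i j = A i j) :
    ∑ m, assoc B (block cl m) (block cl m) - ∑ m, assoc A (block cl m) (block cl m)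
      = ∑ i, (B i i - A i i) := by
  rw [sum_assoc_block_self, sum_assoc_block_self, ← sum_sub_distrib]
  refine sum_congr rfl fun i _ => ?_
  rw [← sum_sub_distrib]
  refine sum_eq_single_of_mem i (by simp [block]) fun j hj hji => ?_
  rw [h i j (Ne.symm hji) (mem_filter.1 hj).2.symm, sub_self]

end IntraBlock

section Perturb

variable {V : Type*} [Fintype V] [DecidableEq V]

lemma perturb_apply_of_ne {A : V → V → ℝ} {b : V} {Q : Finset V} {i j : V} (hij : i ≠ j)
    (hbi : i = b → j ∉ Q) (hbj : j = b → i ∉ Q) : perturb A b Q i j = A i j := by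
  grind [perturb]

lemma perturb_apply_self_sub (A : V → V → ℝ) {b : V} {Q : Finset V} (hb : b ∉ Q) (i : V) :
    perturb A b Q i i - A i i
      = (if i = b then ∑ q ∈ Q, A b q else 0) + (if i ∈ Q then A b i else 0) := by
  by_cases hib : i = b
  · subst hib
    simp [perturb, hb]
  · by_cases hiQ : i ∈ Q <;> simp [perturb, hib, hiQ]

lemma sum_perturb_apply_self_sub (A : V → V → ℝ) {b : V} {Q : Finset V} (hb : b ∉ Q) :
    ∑ i, (perturb A b Q i i - A i i) = 2 * ∑ q ∈ Q, A b q := by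
  simp only [perturb_apply_self_sub A hb, sum_add_distrib, sum_ite_eq', mem_univ, if_true,
    ← sum_filter, filter_mem_eq_inter, univ_inter]
  ring

/-- Since `Q` avoids the block of `b`, the perturbation changes no off-diagonal intra-block entry;
only the diagonal gains `∑ q ∈ Q, A b q` at `b` and `A b q` at each `q ∈ Q`. -/
theorem sum_assoc_block_self_perturb_sub {ι : Type*} [DecidableEq ι] [Fintype ι]
    (A : V → V → ℝ) (cl : V → ι) {b : V} {Q : Finset V} (hQ : ∀ q ∈ Q, cl q ≠ cl b) :
    ∑ m, assoc (perturb A b Q) (block cl m) (block cl m)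
      - ∑ m, assoc A (block cl m) (block cl m) = 2 * ∑ q ∈ Q, A b q := by
  have hb : b ∉ Q := fun h => hQ b h rfl
  rw [sum_assoc_block_self_sub_of_eq_off_diag, sum_perturb_apply_self_sub A hb]
  intro i j hij hcl
  refine perturb_apply_of_ne hij ?_ ?_
  · rintro rfl hj
    exact hQ j hj hcl.symm
  · rintro rfl hi
    exact hQ i hi hcl

end Perturb

lemma sum_interNbrs_eq_dinter {V ι : Type*} [Fintype V] [DecidableEq ι]
    {A : V → V → ℝ} (hnn : ∀ i j, 0 ≤ A i j) (cl : V → ι) (b : V) :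
    ∑ q ∈ interNbrs A cl b, A b q = dinter A cl b := by
  rw [dinter, interNbrs, ← filter_filter]
  refine sum_filter_of_ne fun q _ hq => ?_
  exact lt_of_le_of_ne (hnn b q) (Ne.symm hq)

theorem stmt3_general {V : Type*} [Fintype V] [DecidableEq V] {k : ℕ}
    (A : V → V → ℝ) (hnn : ∀ i j, 0 ≤ A i j)
    (cl : V → Fin k) (b : V) :
    (∑ m : Fin k, assoc (perturb A b (interNbrs A cl b)) (block cl m) (block cl m))
      - (∑ m : Fin k, assoc A (block cl m) (block cl m)) = 2 * dinter A cl b := by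
  rw [sum_assoc_block_self_perturb_sub A cl fun q hq => (mem_filter.1 hq).2.1,
    sum_interNbrs_eq_dinter hnn]

theorem stmt3 {V : Type*} [Fintype V] [DecidableEq V] {k : ℕ}
    (A : V → V → ℝ) (hsym : ∀ i j, A i j = A j i) (hnn : ∀ i j, 0 ≤ A i j)
    (cl : V → Fin k) (hpart : Function.Surjective cl) (b : V) :
    (∑ m : Fin k, assoc (perturb A b (interNbrs A cl b)) (block cl m) (block cl m))
      - (∑ m : Fin k, assoc A (block cl m) (block cl m)) = 2 * dinter A cl b :=
  stmt3_general A hnn cl b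
end
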